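/- arXiv:1209.0717 — 6 statements merged into one kernel-verified Lean document; each statement's English description precedes it below -/
import Mathlib

section
/- Let F be an algebraically closed field of characteristic different from 2 and let a, b, c be nonzero elements of F. Then the polynomial a·x² + b·y² + c·z² is irreducible in the polynomial ring F[x,y,z]. -/
open MvPolynomial

theorem aux1 {R : Type*} [CommRing R] [IsDomain R] (K : Type*) [Field K] [Algebra R K]
    [IsFractionRing R K] (a q : R)
    (hkey : ∀ u v : R, v ≠ 0 → a * u ^ 2 + q * v ^ 2 ≠ 0) (ha' : a ≠ 0) :
    Irreducible (Polynomial.C (algebraMap R K a) * Polynomial.X ^ 2 +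
      Polynomial.C (algebraMap R K q)) := by
  set A := algebraMap R K with hA
  have hAinj := IsFractionRing.injective R K
  have haK : A a ≠ 0 := fun h => ha' (hAinj (by rw [h, map_zero]))
  set d : K := -(A q / A a) with hd
  have hnoroot : ∀ t : K, t ^ 2 ≠ d := by
    intro t ht
    have h1 : A a * t ^ 2 + A q = 0 := by
      rw [ht, hd]
      field_simp
      ring
    obtain ⟨⟨u, v⟩, hs⟩ := IsLocalization.surj (nonZeroDivisors R) t
    simp only at hs
    have hv0 : (v : R) ≠ 0 := nonZeroDivisors.ne_zero v.2
    have h2 : A (a * u ^ 2 + q * (v : R) ^ 2) = 0 := by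
      rw [map_add, map_mul, map_mul, map_pow, map_pow]
      linear_combination (A (v : R)) ^ 2 * h1 - (A a) * (t * A (v : R) + A u) * hs
    exact hkey u v hv0 (hAinj (by rw [h2, map_zero]))
  have hirr := X_pow_sub_C_irreducible_of_prime Nat.prime_two hnoroot
  have hu : IsUnit (Polynomial.C (A a)) := Polynomial.isUnit_C.mpr (isUnit_iff_ne_zero.mpr haK)
  have hfac2 : Polynomial.C (A a) * Polynomial.X ^ 2 + Polynomial.C (A q) =
      Polynomial.C (A a) * (Polynomial.X ^ 2 - Polynomial.C d) := by
    have hscal : A a * d = - A q := by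
      rw [hd]
      field_simp
    rw [mul_sub, ← Polynomial.C_mul, hscal, Polynomial.C_neg, sub_neg_eq_add]
  rw [hfac2]
  exact Associated.irreducible ⟨hu.unit, by rw [IsUnit.unit_spec]; ring⟩ hirr

theorem stmt_0 (F : Type*) [Field F] [IsAlgClosed F] (hchar : (2 : F) ≠ 0)
    (a b c : F) (ha : a ≠ 0) (hb : b ≠ 0) (hc : c ≠ 0) :
    Irreducible (C a * X 0 ^ 2 + C b * X 1 ^ 2 + C c * X 2 ^ 2 :
      MvPolynomial (Fin 3) F) := by
  classical
  set R := MvPolynomial (Fin 2) F with hR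
  -- square root α of -(c/b)
  obtain ⟨α, hα⟩ := IsAlgClosed.exists_pow_nat_eq (-(c/b)) (n := 2) (by norm_num)
  have hα0 : α ≠ 0 := by
    intro h
    rw [h] at hα
    apply hc
    have h0 : -(c / b) = 0 := by rw [← hα]; ring
    exact (div_eq_zero_iff.mp (neg_eq_zero.mp h0)).resolve_right hb
  set π : R := X 0 - C α * X 1 with hπdef
  set π' : R := X 0 + C α * X 1 with hπ'def
  set q : R := C b * X 0 ^ 2 + C c * X 1 ^ 2 with hq
  have hbα : b * α ^ 2 = -c := by rw [hα]; field_simp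
  have hfact : q = C b * (π * π') := by
    have hC : (C (b * α ^ 2) : R) = C (-c) := by rw [hbα]
    rw [map_mul, map_pow, map_neg] at hC
    rw [hq, hπdef, hπ'def]
    linear_combination ((X 1 : R) ^ 2) * hC
  -- evaluation at (α, 1) kills π but not π'
  have hevπ : eval (fun i : Fin 2 => if i = 0 then α else 1) π = 0 := by
    simp [hπdef]
  have hevπ' : eval (fun i : Fin 2 => if i = 0 then α else 1) π' = 2 * α := by
    simp [hπ'def]; ring
  have h2α : (2 : F) * α ≠ 0 := mul_ne_zero hchar hα0
  have hπ'0 : π' ≠ 0 := by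
    intro h
    rw [h, map_zero] at hevπ'
    exact h2α hevπ'.symm
  -- π is prime
  have hπ : Prime π := by
    have h1 : (1 : Fin 2) = (0 : Fin 1).succ := rfl
    have himg : (finSuccEquiv F 1) π = Polynomial.X - Polynomial.C (C α * X 0) := by
      rw [hπdef, map_sub, map_mul, h1, finSuccEquiv_X_succ, finSuccEquiv_X_zero]
      simp [finSuccEquiv_apply]
    refine (MulEquiv.prime_iff (p := π) (finSuccEquiv F 1).toRingEquiv.toMulEquiv).mp ?_
    show Prime ((finSuccEquiv F 1) π)
    rw [himg]; exact Polynomial.prime_X_sub_C _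
  have hππ' : ¬ π ∣ π' := by
    rintro ⟨w, hw⟩
    have := congrArg (eval (fun i : Fin 2 => if i = 0 then α else 1)) hw
    rw [map_mul, hevπ, hevπ', zero_mul] at this
    exact h2α this
  -- key: no solution in R
  have hq0 : q ≠ 0 := by
    rw [hfact]
    exact mul_ne_zero (fun h => hb (by simpa using h)) (mul_ne_zero hπ.ne_zero hπ'0)
  have hkey : ∀ u v : R, v ≠ 0 → C a * u ^ 2 + q * v ^ 2 ≠ 0 := by
    intro u v hv h0
    have hu : u ≠ 0 := by
      rintro rfl
      rw [zero_pow (by norm_num), mul_zero, zero_add, mul_eq_zero] at h0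
      rcases h0 with h | h
      · exact hq0 h
      · exact hv (pow_eq_zero_iff (by norm_num) |>.mp h)
    rw [hfact] at h0
    have heq : C a * u ^ 2 = (- C b) * (π * (π' * v ^ 2)) := by linear_combination h0
    have hCa : ¬ π ∣ (C a : R) := fun h =>
      hπ.not_isUnit (isUnit_of_dvd_unit h ((isUnit_iff_ne_zero.mpr ha).map (C : F →+* R)))
    have hCb : ¬ π ∣ (- C b : R) := fun h =>
      hπ.not_isUnit (isUnit_of_dvd_unit h
        (((isUnit_iff_ne_zero.mpr hb).map (C : F →+* R)).neg))
    have hfinu : FiniteMultiplicity π u := FiniteMultiplicity.of_prime_left hπ hu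
    have hfinv : FiniteMultiplicity π v := FiniteMultiplicity.of_prime_left hπ hv
    have hL : multiplicity π (C a * u ^ 2) = 2 * multiplicity π u := by
      rw [multiplicity_mul hπ
        (FiniteMultiplicity.of_prime_left hπ (mul_ne_zero (fun h => ha (by simpa using h))
          (pow_ne_zero 2 hu))),
        multiplicity_eq_zero.mpr hCa, hfinu.multiplicity_pow hπ, zero_add]
    have hπ'v : π' * v ^ 2 ≠ 0 := mul_ne_zero hπ'0 (pow_ne_zero 2 hv)
    have hCbne : (- C b : R) ≠ 0 := by
      simp only [ne_eq, neg_eq_zero]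
      exact fun h => hb (by simpa using h)
    have hRmult : multiplicity π ((- C b) * (π * (π' * v ^ 2))) =
        1 + 2 * multiplicity π v := by
      rw [multiplicity_mul hπ (FiniteMultiplicity.of_prime_left hπ
            (mul_ne_zero hCbne (mul_ne_zero hπ.ne_zero hπ'v))),
          multiplicity_mul hπ (FiniteMultiplicity.of_prime_left hπ
            (mul_ne_zero hπ.ne_zero hπ'v)),
          multiplicity_mul hπ (FiniteMultiplicity.of_prime_left hπ hπ'v),
          multiplicity_eq_zero.mpr hCb, multiplicity_eq_zero.mpr hππ',
          multiplicity_self, hfinv.multiplicity_pow hπ, zero_add, zero_add]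
    rw [heq, hRmult] at hL
    omega
  -- move to Polynomial R via finSuccEquiv
  set P : Polynomial R := Polynomial.C (C a) * Polynomial.X ^ 2 + Polynomial.C q with hP
  have himg : (finSuccEquiv F 2) (C a * X 0 ^ 2 + C b * X 1 ^ 2 + C c * X 2 ^ 2) = P := by
    have h1 : (1 : Fin 3) = (0 : Fin 2).succ := rfl
    have h2 : (2 : Fin 3) = (1 : Fin 2).succ := rfl
    rw [map_add, map_add, map_mul, map_mul, map_mul, map_pow, map_pow, map_pow,
      h1, h2, finSuccEquiv_X_zero, finSuccEquiv_X_succ, finSuccEquiv_X_succ]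
    simp only [finSuccEquiv_apply, eval₂Hom_C]
    rw [hP, hq]
    ring_nf
    simp [Polynomial.C_mul, Polynomial.C_add, Polynomial.C_pow]
    ring
  rw [← MulEquiv.irreducible_iff (finSuccEquiv F 2), himg]
  have hprim : P.IsPrimitive := by
    intro r hr
    have h2 := (Polynomial.C_dvd_iff_dvd_coeff r P).mp hr 2
    rw [hP] at h2
    simp only [Polynomial.coeff_add, Polynomial.coeff_C_mul, Polynomial.coeff_X_pow,
      if_pos rfl, Polynomial.coeff_C, mul_one] at h2
    norm_num at h2
    exact isUnit_of_dvd_unit h2 ((isUnit_iff_ne_zero.mpr ha).map (C : F →+* R))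
  -- Gauss lemma
  have hmapped : Irreducible (Polynomial.map (algebraMap R (FractionRing R)) P) := by
    have hmap : P.map (algebraMap R (FractionRing R)) =
        Polynomial.C (algebraMap R (FractionRing R) (C a)) * Polynomial.X ^ 2 +
          Polynomial.C (algebraMap R (FractionRing R) q) := by
      rw [hP, Polynomial.map_add, Polynomial.map_mul, Polynomial.map_pow,
        Polynomial.map_C, Polynomial.map_C, Polynomial.map_X]
    rw [hmap]
    exact aux1 (FractionRing R) (C a) q hkey (fun h => ha (by simpa using h))
  letI : NormalizationMonoid R := (UniqueFactorizationMonoid.normalizationMonoid (α := R)).toNormalizationMonoid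
  letI : NormalizedGCDMonoid R := UniqueFactorizationMonoid.toNormalizedGCDMonoid R
  exact (hprim.irreducible_iff_irreducible_map_fraction_map (K := FractionRing R)).mpr hmapped
end

section
/- Let k be a field of characteristic 0 and let a₀, a₁, a₂, p ∈ k[t] be polynomials that are pairwise coprime and such that the product p·a₀·a₁·a₂ is separable (squarefree) in k[t]. Then the affine hypersurface in 𝔸⁴ defined by a₀(t)x₀² + a₁(t)x₁² + a₂(t)x₂² − p(t) = 0 is smooth: for every point (t₀, x₀, x₁, x₂) with coordinates in an algebraic closure of k satisfying the equation, the four partial derivatives of F(t,x₀,x₁,x₂) = a₀(t)x₀² + a₁(t)x₁² + a₂(t)x₂² − p(t) do not all vanish at that point. -/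
open Polynomial

lemma aux_not_both_zero {k : Type*} [Field k] (a b : k[X]) (h : IsCoprime a b)
    (t : AlgebraicClosure k) (ha : aeval t a = 0) : aeval t b ≠ 0 := by
  intro hb
  have h2 : IsCoprime (aeval t a) (aeval t b) := h.map (aeval t).toRingHom
  rw [ha, hb] at h2
  exact not_isCoprime_zero_zero h2

theorem stmt_2 (k : Type*) [Field k] [CharZero k]
    (a₀ a₁ a₂ p : k[X])
    (h01 : IsCoprime a₀ a₁) (h02 : IsCoprime a₀ a₂) (h12 : IsCoprime a₁ a₂)
    (hp0 : IsCoprime p a₀) (hp1 : IsCoprime p a₁) (hp2 : IsCoprime p a₂)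
    (hsep : Squarefree (p * a₀ * a₁ * a₂))
    (t₀ x₀ x₁ x₂ : AlgebraicClosure k)
    (heq : aeval t₀ a₀ * x₀ ^ 2 + aeval t₀ a₁ * x₁ ^ 2 + aeval t₀ a₂ * x₂ ^ 2
        = aeval t₀ p) :
    ¬ (aeval t₀ (derivative a₀) * x₀ ^ 2 + aeval t₀ (derivative a₁) * x₁ ^ 2
          + aeval t₀ (derivative a₂) * x₂ ^ 2 - aeval t₀ (derivative p) = 0
        ∧ 2 * aeval t₀ a₀ * x₀ = 0
        ∧ 2 * aeval t₀ a₁ * x₁ = 0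
        ∧ 2 * aeval t₀ a₂ * x₂ = 0) := by
  rintro ⟨h1, h2, h3, h4⟩
  have two_ne : (2 : AlgebraicClosure k) ≠ 0 := two_ne_zero
  have hx0 : aeval t₀ a₀ = 0 ∨ x₀ = 0 := by
    rcases mul_eq_zero.mp h2 with h | h
    · exact Or.inl ((mul_eq_zero.mp h).resolve_left two_ne)
    · exact Or.inr h
  have hx1 : aeval t₀ a₁ = 0 ∨ x₁ = 0 := by
    rcases mul_eq_zero.mp h3 with h | h
    · exact Or.inl ((mul_eq_zero.mp h).resolve_left two_ne)
    · exact Or.inr h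
  have hx2 : aeval t₀ a₂ = 0 ∨ x₂ = 0 := by
    rcases mul_eq_zero.mp h4 with h | h
    · exact Or.inl ((mul_eq_zero.mp h).resolve_left two_ne)
    · exact Or.inr h
  have hpsq : Squarefree p := hsep.squarefree_of_dvd ⟨a₀ * a₁ * a₂, by ring⟩
  have hpsep : IsCoprime p (derivative p) :=
    PerfectField.separable_iff_squarefree.mpr hpsq
  rcases hx0 with h0 | h0
  · have hx1' : x₁ = 0 := hx1.resolve_left (aux_not_both_zero a₀ a₁ h01 t₀ h0)
    have hx2' : x₂ = 0 := hx2.resolve_left (aux_not_both_zero a₀ a₂ h02 t₀ h0)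
    have hp : aeval t₀ p = 0 := by rw [← heq, h0, hx1', hx2']; ring
    exact aux_not_both_zero p a₀ hp0 t₀ hp h0
  rcases hx1 with h1' | h1'
  · have hx0' : x₀ = 0 := h0
    have hx2' : x₂ = 0 := hx2.resolve_left (aux_not_both_zero a₁ a₂ h12 t₀ h1')
    have hp : aeval t₀ p = 0 := by rw [← heq, h1', hx0', hx2']; ring
    exact aux_not_both_zero p a₁ hp1 t₀ hp h1'
  rcases hx2 with h2' | h2'
  · have hp : aeval t₀ p = 0 := by rw [← heq, h2', h0, h1']; ring
    exact aux_not_both_zero p a₂ hp2 t₀ hp h2'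
  · have hp : aeval t₀ p = 0 := by rw [← heq, h0, h1', h2']; ring
    have hdp : aeval t₀ (derivative p) = 0 := by
      rw [h0, h1', h2'] at h1; simpa using h1
    exact aux_not_both_zero p (derivative p) hpsep t₀ hp hdp
end

section
/- Let k be a field of characteristic 0 and let a₀, a₁, a₂, a₃ ∈ k[t] be pairwise coprime. A point (t₀, [x₀ : x₁ : x₂ : x₃]) of the hypersurface Σᵢ aᵢ(t)xᵢ² = 0 in 𝔸¹ × ℙ³ (over an algebraic closure of k) is a singular point if and only if t₀ is a multiple root of some aᵢ and, for this index i, xᵢ ≠ 0 and xⱼ = 0 for all j ≠ i. -/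
open Polynomial

/-- A point `(t₀, [x₀:x₁:x₂:x₃])` of the hypersurface `Σᵢ aᵢ(t) xᵢ² = 0` in
`𝔸¹ × ℙ³` is singular iff all partial derivatives of the defining polynomial
vanish: the `t`-partial `Σᵢ aᵢ'(t₀) xᵢ²` and the `xᵢ`-partials `2 aᵢ(t₀) xᵢ`. -/
theorem stmt_3 (k : Type*) [Field k] [CharZero k]
    (a : Fin 4 → k[X])
    (hcop : ∀ i j, i ≠ j → IsCoprime (a i) (a j))
    (t₀ : AlgebraicClosure k) (x : Fin 4 → AlgebraicClosure k)
    (hx : x ≠ 0)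
    (heq : ∑ i, aeval t₀ (a i) * x i ^ 2 = 0) :
    ((∑ i, aeval t₀ (derivative (a i)) * x i ^ 2 = 0)
        ∧ ∀ i, 2 * aeval t₀ (a i) * x i = 0)
      ↔ ∃ i, (aeval t₀ (a i) = 0 ∧ aeval t₀ (derivative (a i)) = 0)
          ∧ x i ≠ 0 ∧ ∀ j, j ≠ i → x j = 0 := by
  constructor
  · rintro ⟨hd, hp⟩
    have hp' : ∀ i, aeval t₀ (a i) * x i = 0 := by
      intro i
      have h := hp i
      rw [mul_assoc] at h
      rcases mul_eq_zero.mp h with h | h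
      · exact absurd h two_ne_zero
      · exact h
    obtain ⟨i, hxi⟩ : ∃ i, x i ≠ 0 := by
      by_contra h; push_neg at h; exact hx (funext h)
    have hai : aeval t₀ (a i) = 0 := by
      rcases mul_eq_zero.mp (hp' i) with h | h
      · exact h
      · exact absurd h hxi
    have hxj : ∀ j, j ≠ i → x j = 0 := by
      intro j hj
      rcases mul_eq_zero.mp (hp' j) with h | h
      · exfalso
        obtain ⟨u, v, huv⟩ := hcop j i hj
        have h1 := congrArg (aeval t₀) huv
        simp [map_add, map_mul, h, hai] at h1
      · exact h
    refine ⟨i, ⟨hai, ?_⟩, hxi, hxj⟩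
    have hs : ∑ j, aeval t₀ (derivative (a j)) * x j ^ 2
        = aeval t₀ (derivative (a i)) * x i ^ 2 := by
      apply Finset.sum_eq_single
      · intro j _ hj; simp [hxj j hj]
      · simp
    rw [hs] at hd
    rcases mul_eq_zero.mp hd with h | h
    · exact h
    · exact absurd (pow_eq_zero_iff (by norm_num) |>.mp h) hxi
  · rintro ⟨i, ⟨hai, hdi⟩, hxi, hxj⟩
    constructor
    · have hs : ∑ j, aeval t₀ (derivative (a j)) * x j ^ 2
          = aeval t₀ (derivative (a i)) * x i ^ 2 := by
        apply Finset.sum_eq_single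
        · intro j _ hj; simp [hxj j hj]
        · simp
      rw [hs, hdi, zero_mul]
    · intro j
      by_cases hj : j = i
      · subst hj; simp [hai]
      · simp [hxj j hj]
end

section
/- Let G be a group, N a normal subgroup, and M a G-module with H¹(N, M) = 0. Then the sequence 0 → H²(G/N, M^N) → H²(G, M) → H²(N, M) given by inflation followed by restriction is exact. -/
open groupCohomology hiding H1 H2

universe u

/-- The 1-cocycles, as in the older Mathlib (`groupCohomology.oneCocycles`). -/
def oneCocycles {k G : Type u} [CommRing k] [Group G] (A : Rep.{u} k G) : Submodule k (G → A) :=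
  LinearMap.ker (d₁₂ A).hom

/-- The 1-coboundaries, as a submodule of the 1-cocycles (older Mathlib). -/
def oneCoboundaries {k G : Type u} [CommRing k] [Group G] (A : Rep.{u} k G) :
    Submodule k (oneCocycles A) :=
  LinearMap.range ((d₀₁ A).hom.codRestrict (oneCocycles A) fun x => d₀₁_apply_mem_cocycles₁ x)

/-- `H¹(G, A)` as `Z¹ ⧸ B¹`, as in the older Mathlib. -/
abbrev H1 {k G : Type u} [CommRing k] [Group G] (A : Rep.{u} k G) :=
  oneCocycles A ⧸ oneCoboundaries A

/-- The 2-cocycles, as in the older Mathlib (`groupCohomology.twoCocycles`). -/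
def twoCocycles {k G : Type u} [CommRing k] [Group G] (A : Rep.{u} k G) :
    Submodule k (G × G → A) :=
  LinearMap.ker (d₂₃ A).hom

/-- The 2-coboundaries, as a submodule of the 2-cocycles (older Mathlib). -/
def twoCoboundaries {k G : Type u} [CommRing k] [Group G] (A : Rep.{u} k G) :
    Submodule k (twoCocycles A) :=
  LinearMap.range ((d₁₂ A).hom.codRestrict (twoCocycles A) fun x => d₁₂_apply_mem_cocycles₂ x)

/-- `H²(G, A)` as `Z² ⧸ B²`, as in the older Mathlib. -/
abbrev H2 {k G : Type u} [CommRing k] [Group G] (A : Rep.{u} k G) :=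
  twoCocycles A ⧸ twoCoboundaries A

theorem mem_twoCocycles_def {k G : Type u} [CommRing k] [Group G] {A : Rep.{u} k G}
    (f : G × G → A) :
    f ∈ twoCocycles A ↔ ∀ g h j : G,
      A.ρ g (f (h, j)) - f (g * h, j) + f (g, h * j) - f (g, h) = 0 :=
  mem_cocycles₂_def f

theorem mem_twoCoboundaries_iff {k G : Type u} [CommRing k] [Group G] {A : Rep.{u} k G}
    (f : twoCocycles A) :
    f ∈ twoCoboundaries A ↔ ∃ x : G → A, ∀ g h : G,
      A.ρ g (x h) - x (g * h) + x g = f.1 (g, h) := by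
  constructor
  · rintro ⟨x, rfl⟩
    exact ⟨x, fun g h => rfl⟩
  · rintro ⟨x, hx⟩
    exact ⟨x, Subtype.ext (funext fun g => hx g.1 g.2)⟩

attribute [-instance] AddCommGroup.toIntModule in
section

variable {G' G : Type} [Group G'] [Group G]

/-- The restriction of a representation of `G` along `φ : G' →* G`. -/
noncomputable def compRep (φ : G' →* G) (M : Rep.{0, 0, 0} ℤ G) : Rep.{0, 0, 0} ℤ G' :=
  Rep.of (M.ρ.comp φ)

lemma compRep_ρ (φ : G' →* G) (M : Rep.{0, 0, 0} ℤ G) (g : G') (m : M) :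
    (compRep φ M).ρ g m = M.ρ (φ g) m := rfl

/-- Pullback along `φ` on 2-cocycles. -/
noncomputable def compTwoCocycles (φ : G' →* G) (M : Rep ℤ G) :
    twoCocycles M →ₗ[ℤ] twoCocycles (compRep φ M) where
  toFun f := ⟨fun g => f.1 (φ g.1, φ g.2), by
    refine (mem_twoCocycles_def (A := compRep φ M) _).2 ?_
    intro g h j
    have := (mem_twoCocycles_def (A := M) f.1).1 f.2 (φ g) (φ h) (φ j)
    simp [map_mul, compRep_ρ] at this ⊢
    exact this⟩
  map_add' f g := rfl
  map_smul' r f := rfl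

/-- Pullback along `φ` on `H²`; for `φ` the inclusion of a subgroup this is
the restriction map. -/
noncomputable def compH2 (φ : G' →* G) (M : Rep ℤ G) :
    H2 M →ₗ[ℤ] H2 (compRep φ M) :=
  Submodule.mapQ (twoCoboundaries M) (twoCoboundaries (compRep φ M))
    (compTwoCocycles φ M) (by
    intro f hf
    rcases (mem_twoCoboundaries_iff f).1 hf with ⟨x, hx⟩
    show compTwoCocycles φ M f ∈ twoCoboundaries (compRep φ M)
    exact (mem_twoCoboundaries_iff _).2 ⟨fun g => x (φ g), fun g h => by
      have := hx (φ g) (φ h)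
      show _ = f.1 (φ g, φ h)
      simp [map_mul, compRep_ρ] at this ⊢
      exact this⟩)

variable (N : Subgroup G) [N.Normal] (M : Rep.{0, 0, 0} ℤ G)

/-- The submodule of `N`-invariants `M^N`. -/
noncomputable def invSub : Submodule ℤ M :=
  Representation.invariants (M.ρ.comp N.subtype)

/-- The action of `g : G` on `M^N`, using normality of `N`. -/
noncomputable def invAct (g : G) : invSub N M →ₗ[ℤ] invSub N M where
  toFun x := ⟨M.ρ g x.1, by
    intro n
    show M.ρ (N.subtype n) (M.ρ g x.1) = M.ρ g x.1
    have hmem : g⁻¹ * (n : G) * g ∈ N := by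
      simpa [mul_assoc] using Subgroup.Normal.conj_mem ‹N.Normal› (n : G) n.2 g⁻¹
    calc M.ρ (N.subtype n) (M.ρ g x.1) = M.ρ ((n : G) * g) x.1 := by
            rw [map_mul, Module.End.mul_apply]; rfl
      _ = M.ρ (g * (g⁻¹ * (n : G) * g)) x.1 := by group
      _ = M.ρ g (M.ρ (g⁻¹ * (n : G) * g) x.1) := by
            rw [map_mul, Module.End.mul_apply]
      _ = M.ρ g x.1 := by
            have hfix : M.ρ (g⁻¹ * (n : G) * g) x.1 = x.1 :=
              x.2 ⟨g⁻¹ * (n : G) * g, hmem⟩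
            rw [hfix]⟩
  map_add' x y := Subtype.ext (by simp)
  map_smul' r x := Subtype.ext (by simp)

/-- The representation of `G/N` on the `N`-invariants `M^N`. -/
noncomputable def invQuotRep : Representation ℤ (G ⧸ N) (invSub N M) where
  toFun q := Quotient.liftOn' q (fun g => invAct N M g) (fun a b hab => by
    have hmem : a⁻¹ * b ∈ N := QuotientGroup.leftRel_apply.1 hab
    ext x
    show M.ρ a x.1 = M.ρ b x.1
    have hfix : M.ρ (a⁻¹ * b) x.1 = x.1 := x.2 ⟨a⁻¹ * b, hmem⟩
    calc M.ρ a x.1 = M.ρ a (M.ρ (a⁻¹ * b) x.1) := by rw [hfix]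
      _ = M.ρ (a * (a⁻¹ * b)) x.1 := by
            rw [map_mul M.ρ a (a⁻¹ * b), Module.End.mul_apply]
      _ = M.ρ b x.1 := by group)
  map_one' := by
    ext x
    show M.ρ 1 x.1 = x.1
    simp
  map_mul' q r := by
    induction q using Quotient.inductionOn' with
    | h a =>
      induction r using Quotient.inductionOn' with
      | h b =>
        ext x
        show M.ρ (a * b) x.1 = M.ρ a (M.ρ b x.1)
        rw [map_mul, Module.End.mul_apply]

/-- `M^N` as a representation of `G/N`. -/
noncomputable def invRep : Rep ℤ (G ⧸ N) :=
  Rep.of (invQuotRep N M)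

/-- The inclusion `M^N → M` on underlying sets, from the `G/N`-representation. -/
noncomputable def invVal (x : invRep N M) : M := x.1

lemma invVal_add (x y : invRep N M) :
    invVal N M (x + y) = invVal N M x + invVal N M y := rfl

lemma invVal_sub (x y : invRep N M) :
    invVal N M (x - y) = invVal N M x - invVal N M y := rfl

lemma invVal_zero : invVal N M 0 = 0 := rfl

lemma invRep_ρ (g : G) (x : invRep N M) :
    invVal N M ((invRep N M).ρ (QuotientGroup.mk g) x) = M.ρ g (invVal N M x) := by
  show ((invQuotRep N M) (QuotientGroup.mk g) x : ↥(invSub N M)).1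
    = M.ρ g (x.1 : M)
  rfl

/-- Inflation on 2-cocycles: compose with `G → G/N` and include `M^N ⊆ M`. -/
noncomputable def inflTwoCocycles :
    twoCocycles (invRep N M) →ₗ[ℤ] twoCocycles M where
  toFun f := ⟨fun g =>
      invVal N M (f.1 (QuotientGroup.mk g.1, QuotientGroup.mk g.2)), by
    rw [mem_twoCocycles_def]
    intro g h j
    have h2 := (mem_twoCocycles_def (A := invRep N M) f.1).1 f.2
      (QuotientGroup.mk g) (QuotientGroup.mk h) (QuotientGroup.mk j)
    have h3 := congrArg (invVal N M) h2
    simpa [QuotientGroup.mk_mul, invVal_add, invVal_sub, invVal_zero,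
      invRep_ρ] using h3⟩
  map_add' f g := rfl
  map_smul' r f := rfl

/-- The inflation map `H²(G/N, M^N) → H²(G, M)`. -/
noncomputable def inflH2 : H2 (invRep N M) →ₗ[ℤ] H2 M :=
  Submodule.mapQ (twoCoboundaries (invRep N M)) (twoCoboundaries M)
    (inflTwoCocycles N M) (by
    intro f hf
    rcases (mem_twoCoboundaries_iff f).1 hf with ⟨x, hx⟩
    show inflTwoCocycles N M f ∈ twoCoboundaries M
    exact (mem_twoCoboundaries_iff _).2
      ⟨fun g => invVal N M (x (QuotientGroup.mk g)), fun g h => by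
        have h2 := congrArg (invVal N M)
          (hx (QuotientGroup.mk g) (QuotientGroup.mk h))
        show _ = invVal N M (f.1 (QuotientGroup.mk g, QuotientGroup.mk h))
        simp [QuotientGroup.mk_mul, invVal_add, invVal_sub, invVal_zero,
          invRep_ρ] at h2 ⊢
        exact h2⟩)

instance twoCocyclesFunLike {k G : Type u} [CommRing k] [Group G] (A : Rep.{u} k G) :
    FunLike (twoCocycles A) (G × G) A where
  coe f := f.1
  coe_injective := Subtype.val_injective

theorem twoCocycles_ext {k G : Type u} [CommRing k] [Group G] {A : Rep.{u} k G}
    {f₁ f₂ : twoCocycles A} (h : ∀ g h : G, f₁ (g, h) = f₂ (g, h)) : f₁ = f₂ :=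
  Subtype.ext (funext fun x => h x.1 x.2)

theorem twoCocycles_map_one_fst {k G : Type u} [CommRing k] [Group G] {A : Rep.{u} k G}
    (f : twoCocycles A) (g : G) : f (1, g) = f (1, 1) :=
  cocycles₂_map_one_fst (A := A) f g

theorem twoCocycles_map_one_snd {k G : Type u} [CommRing k] [Group G] {A : Rep.{u} k G}
    (f : twoCocycles A) (g : G) : f (g, 1) = A.ρ g (f (1, 1)) :=
  cocycles₂_map_one_snd (A := A) f g

section Aux
set_option linter.unusedSectionVars false

variable {N M}

lemma rho_mul (x y : G) (z : M) : M.ρ (x * y) z = M.ρ x (M.ρ y z) := by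
  rw [map_mul]; rfl

/-- Extract a primitive from vanishing `H¹(N, M)`. -/
lemma h1cob (hH1N : Subsingleton (H1 (compRep N.subtype M))) (u : N → M)
    (hu : ∀ a b : N, M.ρ (a : G) (u b) - u (a * b) + u a = 0) :
    ∃ m : M, ∀ a : N, M.ρ (a : G) m - m = u a := by
  have hmem : u ∈ oneCocycles (compRep N.subtype M) :=
    (mem_cocycles₁_def (A := compRep N.subtype M) u).2 (fun a b => hu a b)
  have h0 : (⟨u, hmem⟩ : oneCocycles (compRep N.subtype M)) ∈
      oneCoboundaries (compRep N.subtype M) := by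
    have h := Subsingleton.elim
      (Submodule.Quotient.mk (p := oneCoboundaries (compRep N.subtype M)) ⟨u, hmem⟩)
      (0 : H1 (compRep N.subtype M))
    exact (Submodule.Quotient.mk_eq_zero _).1 h
  obtain ⟨x, hx⟩ := h0
  exact ⟨x, fun a => by have := congrFun (congrArg Subtype.val hx) a; exact this⟩

/-- A set-theoretic section of `G → G ⧸ N` sending `1` to `1`. -/
noncomputable def qsec (q : G ⧸ N) : G :=
  @ite _ (q = 1) (Classical.dec _) 1 (Quotient.out q)

lemma qsec_mk (q : G ⧸ N) : QuotientGroup.mk (qsec q) = q := by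
  unfold qsec
  split
  · simp [*]
  · exact Quotient.out_eq' q

lemma qsec_one : qsec (1 : G ⧸ N) = 1 := by unfold qsec; rw [if_pos rfl]

lemma qsec_inv_mem (g : G) : (qsec (QuotientGroup.mk (s := N) g))⁻¹ * g ∈ N := by
  rw [← QuotientGroup.eq]
  exact qsec_mk _

end Aux

section Core
set_option linter.unusedSectionVars false
set_option maxHeartbeats 1600000

variable {N M}

lemma rearr {α : Type*} [AddCommGroup α] {a b c d : α} (h : a = b) (h2 : c - d = a - b) :
    c = d :=
  sub_eq_zero.mp (h2.trans (sub_eq_zero.mpr h))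

lemma hconj (g : G) (a : N) : g * ↑a * g⁻¹ ∈ N :=
  Subgroup.Normal.conj_mem ‹N.Normal› ↑a a.2 g

lemma hconj' (g : G) (a : N) : g⁻¹ * ↑a * g ∈ N := by
  simpa using Subgroup.Normal.conj_mem ‹N.Normal› ↑a a.2 g⁻¹

lemma hval (v : M) (hv : v ∈ invSub N M) : invVal N M ⟨v, hv⟩ = v := rfl

lemma hρgen (q : G ⧸ N) (w : invRep N M) :
    invVal N M ((invRep N M).ρ q w) = M.ρ (qsec q) (invVal N M w) := by
  conv_lhs => rw [← qsec_mk q]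
  exact invRep_ρ N M (qsec q) w

/-- The key construction: a `G`-2-cocycle whose restriction to `N` is a coboundary is,
up to a `G`-coboundary, inflated from `G ⧸ N`. -/
lemma key (hH1N : Subsingleton (H1 (compRep N.subtype M))) (F : twoCocycles M)
    (hres : compTwoCocycles N.subtype M F ∈ twoCoboundaries (compRep N.subtype M)) :
    ∃ W : twoCocycles (invRep N M),
      inflTwoCocycles N M W - F ∈ twoCoboundaries M := by
  classical
  obtain ⟨x, hx⟩ := (mem_twoCoboundaries_iff _).1 hres
  -- extend `x` to `G`
  set xt : G → M := fun g => if h : g ∈ N then x ⟨g, h⟩ else 0 with hxtdef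
  have hxt : ∀ a : N, xt ↑a = x a := fun a => dif_pos a.2
  set B1 : twoCoboundaries M :=
    ⟨(d₁₂ M).hom.codRestrict (twoCocycles M) (fun x => d₁₂_apply_mem_cocycles₂ x) xt,
        LinearMap.mem_range.2 ⟨xt, rfl⟩⟩ with hB1def
  set F1 : twoCocycles M := F - B1.1 with hF1def
  have hF1 : ∀ g h : G, F1 (g, h) = F (g, h) - (M.ρ g (xt h) - xt (g * h) + xt g) :=
    fun g h => rfl
  have hcoc1 : ∀ g h j : G,
      M.ρ g (F1 (h, j)) - F1 (g * h, j) + F1 (g, h * j) - F1 (g, h) = 0 :=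
    (mem_twoCocycles_def ⇑F1).1 F1.2
  have hNN : ∀ a b : N, F1 (↑a, ↑b) = 0 := by
    intro a b
    have e : M.ρ ↑a (xt ↑b) - xt (↑a * ↑b) + xt ↑a = F (↑a, ↑b) := by
      rw [hxt b, show ((a : G) * (b : G)) = ((a * b : N) : G) from rfl, hxt (a * b), hxt a]
      exact hx a b
    rw [hF1, e, sub_self]
  have hNN' : ∀ u v : G, u ∈ N → v ∈ N → F1 (u, v) = 0 := fun u v hu hv =>
    hNN ⟨u, hu⟩ ⟨v, hv⟩
  have hF1_11 : F1 (1, 1) = 0 := hNN' 1 1 N.one_mem N.one_mem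
  have hone_fst : ∀ g : G, F1 (1, g) = 0 := fun g => by
    rw [twoCocycles_map_one_fst F1 g, hF1_11]
  have hone_snd : ∀ g : G, F1 (g, 1) = 0 := fun g => by
    rw [twoCocycles_map_one_snd F1 g, hF1_11, map_zero]
  have hstar : ∀ (g : G) (a b : N), F1 (g, ↑a * ↑b) = F1 (g, ↑a) + F1 (g * ↑a, ↑b) := by
    intro g a b
    have h := hcoc1 g ↑a ↑b
    rw [hNN a b, map_zero] at h
    exact rearr h (by abel)
  -- the twisted cocycle δ
  set del : G → N → M := fun r a =>
    F1 (r, ↑a) + F1 (r * ↑a, r⁻¹) - M.ρ (r * ↑a * r⁻¹) (F1 (r, r⁻¹)) with hdeldef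
  have hdelapp : ∀ (r : G) (a : N),
      del r a = F1 (r, ↑a) + F1 (r * ↑a, r⁻¹) - M.ρ (r * ↑a * r⁻¹) (F1 (r, r⁻¹)) :=
    fun _ _ => rfl
  have hdel : ∀ (r : G) (a b : N),
      del r (a * b) = del r a + M.ρ (r * ↑a * r⁻¹) (del r b) := by
    intro r a b
    rw [hdelapp r (a * b), hdelapp r a, hdelapp r b]
    simp only [MulMemClass.coe_mul]
    have f1 : F1 (r, ↑a * ↑b) = F1 (r, ↑a) + F1 (r * ↑a, ↑b) := hstar r a b
    have f2 : F1 (r * (↑a * ↑b), r⁻¹) =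
        M.ρ (r * ↑a) (F1 (↑b, r⁻¹)) + F1 (r * ↑a, ↑b * r⁻¹) - F1 (r * ↑a, ↑b) := by
      have h := hcoc1 (r * ↑a) ↑b r⁻¹
      rw [mul_assoc r ↑a ↑b] at h
      exact rearr h.symm (by abel)
    have f3 : M.ρ (r * ↑a) (F1 (↑b, r⁻¹)) =
        M.ρ (r * ↑a * r⁻¹) (F1 (r * ↑b, r⁻¹) - F1 (r, ↑b * r⁻¹) + F1 (r, ↑b)) := by
      have h := hcoc1 r ↑b r⁻¹
      have h2 : M.ρ r (F1 (↑b, r⁻¹)) =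
          F1 (r * ↑b, r⁻¹) - F1 (r, ↑b * r⁻¹) + F1 (r, ↑b) := rearr h (by abel)
      rw [← h2, ← rho_mul, show r * ↑a * r⁻¹ * r = r * ↑a from by group]
    have f4 : F1 (r * ↑a, ↑b * r⁻¹) =
        M.ρ (r * ↑a * r⁻¹) (F1 (r, ↑b * r⁻¹)) - F1 (r * ↑a * r⁻¹, r) := by
      have h := hcoc1 (r * ↑a * r⁻¹) r (↑b * r⁻¹)
      rw [show r * ↑a * r⁻¹ * r = r * ↑a from by group,
        show r * (↑b * r⁻¹) = r * ↑b * r⁻¹ from (mul_assoc _ _ _).symm,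
        hNN' (r * ↑a * r⁻¹) (r * ↑b * r⁻¹) (hconj r a) (hconj r b)] at h
      exact rearr h.symm (by abel)
    have f5 : M.ρ (r * ↑a * r⁻¹) (F1 (r, r⁻¹)) =
        F1 (r * ↑a, r⁻¹) + F1 (r * ↑a * r⁻¹, r) := by
      have h := hcoc1 (r * ↑a * r⁻¹) r r⁻¹
      rw [show r * ↑a * r⁻¹ * r = r * ↑a from by group,
        show r * r⁻¹ = 1 from by group, hone_snd] at h
      exact rearr h (by abel)
    have f7 : M.ρ (r * (↑a * ↑b) * r⁻¹) (F1 (r, r⁻¹)) =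
        M.ρ (r * ↑a * r⁻¹) (M.ρ (r * ↑b * r⁻¹) (F1 (r, r⁻¹))) := by
      rw [← rho_mul, show (r * ↑a * r⁻¹) * (r * ↑b * r⁻¹) = r * (↑a * ↑b) * r⁻¹ from by group]
    rw [f1, f2, f3, f4, f7, f5]
    simp only [map_add, map_sub]
    abel
  -- choose the primitives `p q`
  have hex : ∀ q : G ⧸ N, ∃ m : M,
      (∀ a : N, del (qsec q) a = m - M.ρ (qsec q * ↑a * (qsec q)⁻¹) m) ∧ (q = 1 → m = 0) := by
    intro q
    by_cases hq : q = 1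
    · refine ⟨0, fun a => ?_, fun _ => rfl⟩
      subst hq
      rw [qsec_one, hdelapp]
      simp only [inv_one, one_mul, mul_one]
      rw [hone_fst, hone_snd, hF1_11, map_zero]
      simp
    · have hu : ∀ a b : N,
          M.ρ (a : G) (-(M.ρ (qsec q)⁻¹ (del (qsec q) b)))
            - (-(M.ρ (qsec q)⁻¹ (del (qsec q) (a * b))))
            + (-(M.ρ (qsec q)⁻¹ (del (qsec q) a))) = 0 := by
        intro a b
        rw [hdel (qsec q) a b]
        simp only [map_add, map_neg, neg_neg]
        rw [← rho_mul, ← rho_mul,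
          show (a : G) * (qsec q)⁻¹ = (qsec q)⁻¹ * (qsec q * ↑a * (qsec q)⁻¹) from by group]
        abel
      obtain ⟨m, hm⟩ := h1cob hH1N _ hu
      refine ⟨M.ρ (qsec q) m, fun a => ?_, fun h => absurd h hq⟩
      have h3 : M.ρ (qsec q)⁻¹ (del (qsec q) a) = m - M.ρ (a : G) m :=
        rearr (hm a) (by abel)
      have h4 : M.ρ (qsec q) (M.ρ (qsec q)⁻¹ (del (qsec q) a)) = del (qsec q) a := by
        rw [← rho_mul, show qsec q * (qsec q)⁻¹ = 1 from by group, map_one]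
        rfl
      rw [← h4, h3, map_sub, ← rho_mul, ← rho_mul,
        show qsec q * ↑a * (qsec q)⁻¹ * qsec q = qsec q * ↑a from by group]
  set p : G ⧸ N → M := fun q => (hex q).choose with hpdef
  have hp : ∀ (q : G ⧸ N) (a : N),
      del (qsec q) a = p q - M.ρ (qsec q * ↑a * (qsec q)⁻¹) (p q) :=
    fun q => (hex q).choose_spec.1
  have hp1 : p 1 = 0 := (hex 1).choose_spec.2 rfl
  -- the correcting 1-cochain
  set y : G → M := fun g =>
    F1 (qsec (QuotientGroup.mk g : G ⧸ N), (qsec (QuotientGroup.mk g : G ⧸ N))⁻¹ * g)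
      - p (QuotientGroup.mk g) with hydef
  have hyg : ∀ g : G, y g =
      F1 (qsec (QuotientGroup.mk g : G ⧸ N), (qsec (QuotientGroup.mk g : G ⧸ N))⁻¹ * g)
        - p (QuotientGroup.mk g) := fun _ => rfl
  have hyN : ∀ a : N, y ↑a = 0 := by
    intro a
    have h1 : (QuotientGroup.mk (↑a : G) : G ⧸ N) = 1 := (QuotientGroup.eq_one_iff _).2 a.2
    rw [hyg ↑a, h1, qsec_one, hp1, hone_fst, sub_zero]
  set B2 : twoCoboundaries M :=
    ⟨(d₁₂ M).hom.codRestrict (twoCocycles M) (fun x => d₁₂_apply_mem_cocycles₂ x) y,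
        LinearMap.mem_range.2 ⟨y, rfl⟩⟩ with hB2def
  set F2 : twoCocycles M := F1 + B2.1 with hF2def
  have hF2 : ∀ g h : G, F2 (g, h) = F1 (g, h) + (M.ρ g (y h) - y (g * h) + y g) :=
    fun g h => rfl
  have hcoc2 : ∀ g h j : G,
      M.ρ g (F2 (h, j)) - F2 (g * h, j) + F2 (g, h * j) - F2 (g, h) = 0 :=
    (mem_twoCocycles_def ⇑F2).1 F2.2
  have hmkn : ∀ (g : G) (a : N), (QuotientGroup.mk (g * ↑a) : G ⧸ N) = QuotientGroup.mk g := by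
    intro g a
    rw [QuotientGroup.mk_mul, (QuotientGroup.eq_one_iff (↑a : G)).2 a.2, mul_one]
  have hnmk : ∀ (a : N) (g : G), (QuotientGroup.mk (↑a * g) : G ⧸ N) = QuotientGroup.mk g := by
    intro a g
    rw [QuotientGroup.mk_mul, (QuotientGroup.eq_one_iff (↑a : G)).2 a.2, one_mul]
  -- F2 kills G × N
  have hGN : ∀ (g : G) (a : N), F2 (g, ↑a) = 0 := by
    intro g a
    set r : G := qsec (QuotientGroup.mk g : G ⧸ N) with hrdef
    have hm : r⁻¹ * g ∈ N := by rw [hrdef]; exact qsec_inv_mem g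
    have e : F1 (r, r⁻¹ * (g * ↑a)) = F1 (r, r⁻¹ * g) + F1 (g, ↑a) := by
      have h : F1 (r, (r⁻¹ * g) * ↑a) = F1 (r, r⁻¹ * g) + F1 (r * (r⁻¹ * g), ↑a) :=
        hstar r ⟨r⁻¹ * g, hm⟩ a
      rwa [show (r⁻¹ * g) * ↑a = r⁻¹ * (g * ↑a) from by group,
        show r * (r⁻¹ * g) = g from by group] at h
    have hyg1 : y g = F1 (r, r⁻¹ * g) - p (QuotientGroup.mk g) := by
      rw [hyg g, ← hrdef]
    have hyg2 : y (g * ↑a) = F1 (r, r⁻¹ * (g * ↑a)) - p (QuotientGroup.mk g) := by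
      rw [hyg (g * ↑a), hmkn g a, ← hrdef]
    rw [hF2, hyN a, hyg1, hyg2, e, map_zero]
    abel
  -- F2 kills N × G
  have hNG : ∀ (a : N) (g : G), F2 (↑a, g) = 0 := by
    intro n g
    set r : G := qsec (QuotientGroup.mk g : G ⧸ N) with hrdef
    have hm : r⁻¹ * g ∈ N := by rw [hrdef]; exact qsec_inv_mem g
    have hm2 : r⁻¹ * ↑n * r ∈ N := hconj' r n
    have hyg1 : y g = F1 (r, r⁻¹ * g) - p (QuotientGroup.mk g) := by
      rw [hyg g, ← hrdef]
    have hyg2 : y (↑n * g) = F1 (r, r⁻¹ * (↑n * g)) - p (QuotientGroup.mk g) := by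
      rw [hyg (↑n * g), hnmk n g, ← hrdef]
    have eA : F1 (r, r⁻¹ * (↑n * g)) =
        F1 (r, r⁻¹ * ↑n * r) + F1 (↑n * r, r⁻¹ * g) := by
      have h : F1 (r, (r⁻¹ * ↑n * r) * (r⁻¹ * g)) =
          F1 (r, r⁻¹ * ↑n * r) + F1 (r * (r⁻¹ * ↑n * r), r⁻¹ * g) :=
        hstar r ⟨r⁻¹ * ↑n * r, hm2⟩ ⟨r⁻¹ * g, hm⟩
      rwa [show (r⁻¹ * ↑n * r) * (r⁻¹ * g) = r⁻¹ * (↑n * g) from by group,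
        show r * (r⁻¹ * ↑n * r) = ↑n * r from by group] at h
    have eB : M.ρ ↑n (F1 (r, r⁻¹ * g)) =
        F1 (↑n * r, r⁻¹ * g) - F1 (↑n, g) + F1 (↑n, r) := by
      have h := hcoc1 ↑n r (r⁻¹ * g)
      rw [show r * (r⁻¹ * g) = g from by group] at h
      exact rearr h (by abel)
    have eC : M.ρ ↑n (F1 (r, r⁻¹)) = F1 (↑n * r, r⁻¹) + F1 (↑n, r) := by
      have h := hcoc1 ↑n r r⁻¹
      rw [show r * r⁻¹ = 1 from by group, hone_snd] at h
      exact rearr h (by abel)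
    have eD : M.ρ ↑n (p (QuotientGroup.mk g)) = p (QuotientGroup.mk g)
        - F1 (r, r⁻¹ * ↑n * r) - F1 (↑n * r, r⁻¹) + M.ρ ↑n (F1 (r, r⁻¹)) := by
      have h : F1 (r, r⁻¹ * ↑n * r) + F1 (r * (r⁻¹ * ↑n * r), r⁻¹)
          - M.ρ (r * (r⁻¹ * ↑n * r) * r⁻¹) (F1 (r, r⁻¹))
          = p (QuotientGroup.mk g)
            - M.ρ (r * (r⁻¹ * ↑n * r) * r⁻¹) (p (QuotientGroup.mk g)) := by
        rw [hrdef]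
        exact hp (QuotientGroup.mk g) ⟨(qsec (QuotientGroup.mk g : G ⧸ N))⁻¹ * ↑n
          * qsec (QuotientGroup.mk g : G ⧸ N), by rw [← hrdef]; exact hm2⟩
      rw [show r * (r⁻¹ * ↑n * r) = ↑n * r from by group,
        show (↑n : G) * r * r⁻¹ = (↑n : G) from by group] at h
      exact rearr h (by abel)
    rw [hF2, hyN n, hyg1, hyg2, map_sub, eA, eB, eD, eC]
    abel
  -- coset invariance of F2
  have hright : ∀ (g h : G) (a : N), F2 (g, h * ↑a) = F2 (g, h) := by
    intro g h a
    have h0 := hcoc2 g h ↑a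
    rw [hGN h a, hGN (g * h) a, map_zero] at h0
    exact rearr h0 (by abel)
  have hleft : ∀ (g h : G) (a : N), F2 (g * ↑a, h) = F2 (g, h) := by
    intro g h a
    have h0 := hcoc2 g ↑a h
    rw [hNG a h, hGN g a, map_zero] at h0
    have h1 : F2 (g, ↑a * h) = F2 (g, h) := by
      have h2 := hright g h ⟨h⁻¹ * ↑a * h, hconj' h a⟩
      rwa [show h * (h⁻¹ * ↑a * h) = ↑a * h from by group] at h2
    rw [← h1]
    exact rearr h0.symm (by abel)
  have hrho : ∀ (a : N) (g h : G), M.ρ (a : G) (F2 (g, h)) = F2 (g, h) := by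
    intro a g h
    have h0 := hcoc2 ↑a g h
    rw [hNG a (g * h), hNG a g] at h0
    have h1 : F2 (↑a * g, h) = F2 (g, h) := by
      have h2 := hleft g h ⟨g⁻¹ * ↑a * g, hconj' g a⟩
      rwa [show g * (g⁻¹ * ↑a * g) = ↑a * g from by group] at h2
    rw [h1] at h0
    exact rearr h0 (by abel)
  have hleft' : ∀ g g' h : G, (QuotientGroup.mk g : G ⧸ N) = QuotientGroup.mk g' →
      F2 (g, h) = F2 (g', h) := by
    intro g g' h hq
    have hm : g⁻¹ * g' ∈ N := QuotientGroup.eq.mp hq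
    have h2 : F2 (g * (g⁻¹ * g'), h) = F2 (g, h) := hleft g h ⟨g⁻¹ * g', hm⟩
    rw [show g * (g⁻¹ * g') = g' from by group] at h2
    exact h2.symm
  have hright' : ∀ g h h' : G, (QuotientGroup.mk h : G ⧸ N) = QuotientGroup.mk h' →
      F2 (g, h) = F2 (g, h') := by
    intro g h h' hq
    have hm : h⁻¹ * h' ∈ N := QuotientGroup.eq.mp hq
    have h2 : F2 (g, h * (h⁻¹ * h')) = F2 (g, h) := hright g h ⟨h⁻¹ * h', hm⟩
    rw [show h * (h⁻¹ * h') = h' from by group] at h2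
    exact h2.symm
  -- the inflated cocycle
  have hWmem : ∀ q : (G ⧸ N) × (G ⧸ N),
      F2 (qsec q.1, qsec q.2) ∈ invSub N M := by
    intro q a
    exact hrho a _ _
  set W : twoCocycles (invRep N M) :=
    ⟨fun q => (⟨F2 (qsec q.1, qsec q.2), hWmem q⟩ : invSub N M), by
      refine (mem_twoCocycles_def _).2 ?_
      intro q1 q2 q3
      apply Subtype.val_injective
      show invVal N M ((invRep N M).ρ q1 ⟨F2 (qsec q2, qsec q3), hWmem (q2, q3)⟩)
          - F2 (qsec (q1 * q2), qsec q3) + F2 (qsec q1, qsec (q2 * q3))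
          - F2 (qsec q1, qsec q2) = 0
      have e : invVal N M ((invRep N M).ρ q1 ⟨F2 (qsec q2, qsec q3), hWmem (q2, q3)⟩)
          = M.ρ (qsec q1) (F2 (qsec q2, qsec q3)) := hρgen q1 _
      rw [e]
      rw [hleft' (qsec (q1 * q2)) (qsec q1 * qsec q2) (qsec q3)
          (by rw [qsec_mk, QuotientGroup.mk_mul, qsec_mk, qsec_mk]),
        hright' (qsec q1) (qsec (q2 * q3)) (qsec q2 * qsec q3)
          (by rw [qsec_mk, QuotientGroup.mk_mul, qsec_mk, qsec_mk])]
      exact hcoc2 (qsec q1) (qsec q2) (qsec q3)⟩ with hWdef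
  have hWF2 : inflTwoCocycles N M W = F2 := by
    apply twoCocycles_ext
    intro g h
    show F2 (qsec (QuotientGroup.mk g : G ⧸ N), qsec (QuotientGroup.mk h : G ⧸ N)) = F2 (g, h)
    rw [hleft' (qsec (QuotientGroup.mk g : G ⧸ N)) g (qsec (QuotientGroup.mk h : G ⧸ N)) (by rw [qsec_mk]),
      hright' g (qsec (QuotientGroup.mk h : G ⧸ N)) h (by rw [qsec_mk])]
  refine ⟨W, ?_⟩
  rw [hWF2, hF2def, hF1def,
    show F - B1.1 + B2.1 - F = B2.1 - B1.1 from by abel]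
  exact sub_mem B2.2 B1.2

end Core

section Fin
set_option linter.unusedSectionVars false
set_option maxHeartbeats 1600000

variable {N M}

lemma inj_aux (hH1N : Subsingleton (H1 (compRep N.subtype M)))
    (W : twoCocycles (invRep N M))
    (h : inflTwoCocycles N M W ∈ twoCoboundaries M) :
    W ∈ twoCoboundaries (invRep N M) := by
  classical
  obtain ⟨x, hx⟩ := (mem_twoCoboundaries_iff _).1 h
  have hinfl : ∀ g h : G, M.ρ g (x h) - x (g * h) + x g
      = invVal N M (W (QuotientGroup.mk g, QuotientGroup.mk h)) := hx
  have hmk1 : ∀ a : N, (QuotientGroup.mk (↑a : G) : G ⧸ N) = 1 :=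
    fun a => (QuotientGroup.eq_one_iff _).2 a.2
  have hW1g : ∀ q : G ⧸ N, invVal N M (W (1, q)) = invVal N M (W (1, 1)) :=
    fun q => by rw [twoCocycles_map_one_fst W q]
  have hWg1 : ∀ g : G, invVal N M (W (QuotientGroup.mk g, 1))
      = M.ρ g (invVal N M (W (1, 1))) := by
    intro g
    rw [twoCocycles_map_one_snd W (QuotientGroup.mk g : G ⧸ N)]
    exact invRep_ρ N M g (W (1, 1))
  have hu : ∀ a b : N,
      M.ρ (a : G) (x ↑b - invVal N M (W (1, 1)))
        - (x (↑a * ↑b) - invVal N M (W (1, 1)))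
        + (x ↑a - invVal N M (W (1, 1))) = 0 := by
    intro a b
    have h1 : M.ρ (↑a : G) (x ↑b) - x (↑a * ↑b) + x ↑a = invVal N M (W (1, 1)) := by
      have h0 := hinfl ↑a ↑b
      rwa [hmk1 a, hmk1 b] at h0
    rw [map_sub,
      show M.ρ (↑a : G) (invVal N M (W (1, 1))) = invVal N M (W (1, 1)) from (W (1, 1)).2 a]
    exact rearr h1 (by abel)
  obtain ⟨m, hm⟩ := h1cob hH1N (fun a => x ↑a - invVal N M (W (1, 1))) hu
  set xp : G → M := fun g => x g - (M.ρ g m - m) with hxpdef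
  have hxp : ∀ g : G, xp g = x g - (M.ρ g m - m) := fun _ => rfl
  have hd : ∀ g h : G, M.ρ g (xp h) - xp (g * h) + xp g
      = invVal N M (W (QuotientGroup.mk g, QuotientGroup.mk h)) := by
    intro g h
    have h1 := hinfl g h
    rw [hxp g, hxp h, hxp (g * h), map_sub, map_sub, ← rho_mul]
    exact rearr h1 (by abel)
  have hxpN : ∀ a : N, xp ↑a = invVal N M (W (1, 1)) := by
    intro a
    rw [hxp]
    exact rearr (hm a).symm (by abel)
  have hconstc : ∀ (g : G) (a : N), xp (g * ↑a) = xp g := by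
    intro g a
    have h1 := hd g ↑a
    rw [hmk1 a, hWg1 g, hxpN a] at h1
    exact rearr h1.symm (by abel)
  have hinvc : ∀ (a : N) (g : G), M.ρ (a : G) (xp g) = xp g := by
    intro a g
    have h1 := hd ↑a g
    rw [hmk1 a, hW1g (QuotientGroup.mk g), hxpN a] at h1
    have h2 : xp (↑a * g) = xp g := by
      have h3 := hconstc g ⟨g⁻¹ * ↑a * g, hconj' g a⟩
      rwa [show g * (g⁻¹ * ↑a * g) = ↑a * g from by group] at h3
    rw [h2] at h1
    exact rearr h1 (by abel)
  have hxpcoset : ∀ g g' : G, (QuotientGroup.mk g : G ⧸ N) = QuotientGroup.mk g' →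
      xp g = xp g' := by
    intro g g' hq
    have h3 : xp (g * (g⁻¹ * g')) = xp g := hconstc g ⟨g⁻¹ * g', QuotientGroup.eq.mp hq⟩
    rw [show g * (g⁻¹ * g') = g' from by group] at h3
    exact h3.symm
  apply (mem_twoCoboundaries_iff W).2
  refine ⟨fun q => (⟨xp (qsec q), fun a => hinvc a (qsec q)⟩ : invSub N M), ?_⟩
  intro q1 q2
  apply Subtype.val_injective
  show invVal N M ((invRep N M).ρ q1 ⟨xp (qsec q2), fun a => hinvc a (qsec q2)⟩)
      - xp (qsec (q1 * q2)) + xp (qsec q1) = invVal N M (W (q1, q2))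
  have e : invVal N M ((invRep N M).ρ q1 ⟨xp (qsec q2), fun a => hinvc a (qsec q2)⟩)
      = M.ρ (qsec q1) (xp (qsec q2)) := hρgen q1 _
  rw [e]
  rw [hxpcoset (qsec (q1 * q2)) (qsec q1 * qsec q2)
    (by rw [qsec_mk, QuotientGroup.mk_mul, qsec_mk, qsec_mk])]
  have h1 := hd (qsec q1) (qsec q2)
  rw [qsec_mk, qsec_mk] at h1
  exact h1

end Fin

/-- Hochschild–Serre low-degree exactness in degree 2: if `H¹(N, M) = 0`, the
sequence `0 → H²(G/N, M^N) → H²(G, M) → H²(N, M)`, given by inflation followed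
by restriction, is exact. -/
theorem stmt_7 (hH1N : Subsingleton (H1 (compRep N.subtype M))) :
    Function.Injective (inflH2 N M) ∧
      LinearMap.range (inflH2 N M) = LinearMap.ker (compH2 N.subtype M) := by
  constructor
  · have hker : ∀ z : H2 (invRep N M), inflH2 N M z = 0 → z = 0 := by
      intro z hz
      obtain ⟨W, rfl⟩ := Submodule.Quotient.mk_surjective _ z
      have h1 : inflH2 N M (Submodule.Quotient.mk W)
          = Submodule.Quotient.mk (inflTwoCocycles N M W) :=
        Submodule.mapQ_apply _ _ _ W
      rw [h1, Submodule.Quotient.mk_eq_zero] at hz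
      rw [Submodule.Quotient.mk_eq_zero]
      exact inj_aux hH1N W hz
    intro z1 z2 h12
    have h := hker (z1 - z2) (by rw [map_sub, h12, sub_self])
    exact sub_eq_zero.mp h
  · apply le_antisymm
    · rintro w ⟨z, rfl⟩
      obtain ⟨W, rfl⟩ := Submodule.Quotient.mk_surjective _ z
      rw [LinearMap.mem_ker]
      have h1 : inflH2 N M (Submodule.Quotient.mk W)
          = Submodule.Quotient.mk (inflTwoCocycles N M W) :=
        Submodule.mapQ_apply _ _ _ W
      have h2 : compH2 N.subtype M (Submodule.Quotient.mk (inflTwoCocycles N M W))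
          = Submodule.Quotient.mk (compTwoCocycles N.subtype M (inflTwoCocycles N M W)) :=
        Submodule.mapQ_apply _ _ _ _
      rw [h1, h2, Submodule.Quotient.mk_eq_zero]
      apply (mem_twoCoboundaries_iff _).2
      refine ⟨fun _ => invVal N M (W (1, 1)), ?_⟩
      intro a b
      show M.ρ (↑a : G) (invVal N M (W (1, 1))) - invVal N M (W (1, 1))
          + invVal N M (W (1, 1))
        = invVal N M (W ((QuotientGroup.mk (↑a : G) : G ⧸ N),
            (QuotientGroup.mk (↑b : G) : G ⧸ N)))
      rw [(QuotientGroup.eq_one_iff (↑a : G)).2 a.2, (QuotientGroup.eq_one_iff (↑b : G)).2 b.2,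
        show M.ρ (↑a : G) (invVal N M (W (1, 1))) = invVal N M (W (1, 1))
          from (W (1, 1)).2 a]
      abel
    · intro z hz
      obtain ⟨F, rfl⟩ := Submodule.Quotient.mk_surjective _ z
      rw [LinearMap.mem_ker] at hz
      have h2 : compH2 N.subtype M (Submodule.Quotient.mk F)
          = Submodule.Quotient.mk (compTwoCocycles N.subtype M F) :=
        Submodule.mapQ_apply _ _ _ _
      rw [h2, Submodule.Quotient.mk_eq_zero] at hz
      obtain ⟨W, hW⟩ := key hH1N F hz
      refine ⟨Submodule.Quotient.mk W, ?_⟩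
      have h1 : inflH2 N M (Submodule.Quotient.mk W)
          = Submodule.Quotient.mk (inflTwoCocycles N M W) :=
        Submodule.mapQ_apply _ _ _ W
      rw [h1]
      exact (Submodule.Quotient.eq _).2 hW

end
end

section
/- Let p be a prime, c ∈ ℚₚ, a ∈ ℚₚ×, and N a positive integer. Then for all sufficiently large s, the element c + a^N / p^{N s} is an N-th power in ℚₚ×. -/
open Polynomial

lemma one_add_is_pow {p : ℕ} [Fact p.Prime] (N : ℕ) (hN : 0 < N) (u : ℚ_[p])
    (hu : ‖u‖ < min 1 (‖(N : ℚ_[p])‖ ^ 2)) :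
    ∃ z : ℚ_[p], z ≠ 0 ∧ z ^ N = 1 + u := by
  have hu1 : ‖u‖ < 1 := lt_of_lt_of_le hu (min_le_left _ _)
  have hb : ‖(1 : ℚ_[p]) + u‖ ≤ 1 := by
    calc ‖(1 : ℚ_[p]) + u‖ ≤ max ‖(1:ℚ_[p])‖ ‖u‖ := Padic.nonarchimedean _ _
    _ ≤ 1 := by simp [le_of_lt hu1]
  set b : ℤ_[p] := ⟨1 + u, hb⟩ with hbdef
  set F : Polynomial ℤ_[p] := X ^ N - C b with hF
  have heval : F.eval 1 = 1 - b := by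
    simp [hF]
  have hderiv : F.derivative.eval 1 = (N : ℤ_[p]) := by
    simp [hF, derivative_X_pow]
  have hnorm : ‖F.eval 1‖ < ‖F.derivative.eval 1‖ ^ 2 := by
    rw [heval, hderiv]
    have h1 : ‖(1 - b : ℤ_[p])‖ = ‖u‖ := by
      rw [PadicInt.norm_def]
      push_cast [hbdef]
      show ‖(1 : ℚ_[p]) - (1 + u)‖ = ‖u‖
      rw [show (1 : ℚ_[p]) - (1 + u) = -u by ring, norm_neg]
    have h2 : ‖(N : ℤ_[p])‖ = ‖(N : ℚ_[p])‖ := by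
      rw [← PadicInt.coe_natCast, PadicInt.norm_def]
    rw [h1, h2]
    exact lt_of_lt_of_le hu (min_le_right _ _)
  obtain ⟨z, hz, -⟩ := hensels_lemma hnorm
  have hzN : (z : ℚ_[p]) ^ N = 1 + u := by
    have : z ^ N = b := by
      have := hz
      simp [hF, sub_eq_zero] at this
      exact this
    have := congrArg (Subtype.val) this
    simpa [hbdef] using this
  refine ⟨z, ?_, hzN⟩
  intro h
  have h1u : (1 : ℚ_[p]) + u ≠ 0 := by
    intro h0
    have hu' : u = -1 := eq_neg_of_add_eq_zero_right h0
    rw [hu'] at hu1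
    simp at hu1
  rw [h] at hzN
  simp [zero_pow hN.ne'] at hzN
  exact h1u hzN.symm

theorem stmt_9 (p : ℕ) [Fact p.Prime] (c : ℚ_[p]) (a : ℚ_[p]) (ha : a ≠ 0)
    (N : ℕ) (hN : 0 < N) :
    ∃ s₀ : ℕ, ∀ s : ℕ, s₀ ≤ s →
      ∃ y : ℚ_[p], y ≠ 0 ∧ y ^ N = c + a ^ N / (p : ℚ_[p]) ^ (N * s) := by
  have hp : (p : ℚ_[p]) ≠ 0 := by
    exact_mod_cast (Nat.cast_ne_zero (R := ℚ_[p])).mpr (Fact.out (p := p.Prime)).ne_zero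
  by_cases hc : c = 0
  · refine ⟨0, fun s _ => ⟨a / (p : ℚ_[p]) ^ s, ?_, ?_⟩⟩
    · exact div_ne_zero ha (pow_ne_zero _ hp)
    · rw [div_pow, ← pow_mul, mul_comm s N, hc, zero_add]
  · -- c ≠ 0
    have hNne : (N : ℚ_[p]) ≠ 0 := Nat.cast_ne_zero.mpr hN.ne'
    set ε : ℝ := min 1 (‖(N : ℚ_[p])‖ ^ 2) with hε
    have hεpos : 0 < ε := lt_min one_pos (pow_pos (norm_pos_iff.mpr hNne) 2)
    have hca : 0 < ‖c / a ^ N‖ := norm_pos_iff.mpr (div_ne_zero hc (pow_ne_zero _ ha))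
    have hplt : ‖(p : ℚ_[p])‖ < 1 := by
      rw [Padic.norm_p]
      rw [inv_lt_one_iff₀]
      right
      exact_mod_cast (Fact.out (p := p.Prime)).one_lt
    have hpnn : 0 ≤ ‖(p : ℚ_[p])‖ := norm_nonneg _
    obtain ⟨n, hn⟩ := exists_pow_lt_of_lt_one (div_pos hεpos hca) hplt
    refine ⟨n, fun s hs => ?_⟩
    set u : ℚ_[p] := c * (p : ℚ_[p]) ^ (N * s) / a ^ N with hu
    have hule : ‖u‖ < ε := by
      have h1 : ‖u‖ = ‖c / a ^ N‖ * ‖(p : ℚ_[p])‖ ^ (N * s) := by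
        rw [hu]
        simp only [norm_div, norm_mul, norm_pow]
        ring
      have h2 : ‖(p : ℚ_[p])‖ ^ (N * s) ≤ ‖(p : ℚ_[p])‖ ^ n := by
        apply pow_le_pow_of_le_one hpnn (le_of_lt hplt)
        calc n ≤ s := hs
        _ ≤ N * s := Nat.le_mul_of_pos_left s hN
      rw [h1]
      calc ‖c / a ^ N‖ * ‖(p : ℚ_[p])‖ ^ (N * s)
          ≤ ‖c / a ^ N‖ * ‖(p : ℚ_[p])‖ ^ n := by gcongr
        _ < ‖c / a ^ N‖ * (ε / ‖c / a ^ N‖) := by gcongr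
        _ = ε := by rw [mul_comm, div_mul_cancel₀ _ hca.ne']
    obtain ⟨z, hz0, hzN⟩ := one_add_is_pow N hN u hule
    refine ⟨a / (p : ℚ_[p]) ^ s * z, ?_, ?_⟩
    · exact mul_ne_zero (div_ne_zero ha (pow_ne_zero _ hp)) hz0
    · rw [mul_pow, hzN, div_pow, ← pow_mul, mul_comm s N, hu]
      field_simp
      ring
end

section
/- Let p₁, ..., p_n be distinct primes, q a prime distinct from all pᵢ, let xᵢ ∈ ℚ_{pᵢ} for each i, x_∞ ∈ ℝ, and ε > 0. Then there exists θ ∈ ℤ[1/(p₁⋯p_n·q)] (that is, θ is a rational number integral at every prime outside {p₁,...,p_n,q}) such that |θ − xᵢ|_{pᵢ} < ε for each i and |θ − x_∞| < ε. -/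
private lemma aux_norm_int_eq_one {p : ℕ} [Fact p.Prime] {k : ℤ} (h : ¬ (p : ℤ) ∣ k) :
    ‖(k : ℚ_[p])‖ = 1 :=
  le_antisymm (Padic.norm_int_le_one k)
    (le_of_not_gt fun hlt => h ((Padic.norm_intCast_lt_one_iff (k := k)).mp hlt))

/-- Strong approximation for the affine line over `ℚ` away from the place `q`,
with an archimedean condition. -/
theorem stmt_12 (n : ℕ) (p : Fin n → ℕ) (hp : ∀ i, (p i).Prime)
    (hdist : Function.Injective p)
    (q : ℕ) (hq : q.Prime) (hqp : ∀ i, q ≠ p i)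
    (x : ∀ i, @Padic (p i) ⟨hp i⟩) (x_inf : ℝ) (ε : ℝ) (hε : 0 < ε) :
    ∃ θ : ℚ,
      (∃ (a : ℤ) (m : ℕ), θ = (a : ℚ) / ((∏ i, p i) * q) ^ m) ∧
      (∀ i, @norm _ (@Padic.normedField (p i) ⟨hp i⟩).toNorm
          ((θ : @Padic (p i) ⟨hp i⟩) - x i) < ε) ∧
      |(θ : ℝ) - x_inf| < ε := by
  haveI inst : ∀ i, Fact (p i).Prime := fun i => ⟨hp i⟩
  set P : ℕ := ∏ i, p i with hPdef
  have hPpos : 0 < P := Finset.prod_pos fun i _ => (hp i).pos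
  have hp2 : ∀ i, (2 : ℝ) ≤ (p i : ℝ) := fun i => by exact_mod_cast (hp i).two_le
  have hppos : ∀ i, (0 : ℝ) < (p i : ℝ) := fun i => by
    exact_mod_cast (hp i).pos
  -- exact norm of P
  have hnormP : ∀ i, ‖(P : ℚ_[p i])‖ = ((p i : ℝ))⁻¹ := by
    intro i
    have hfac : P = p i * ∏ j ∈ Finset.univ.erase i, p j :=
      (Finset.mul_prod_erase Finset.univ p (Finset.mem_univ i)).symm
    have hcop : Nat.Coprime (p i) (∏ j ∈ Finset.univ.erase i, p j) :=
      Nat.Coprime.prod_right fun j hj =>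
        ((Nat.coprime_primes (hp i) (hp j)).mpr fun h => by
          exact (Finset.mem_erase.mp hj).1 (hdist h).symm)
    have hndvd : ¬ ((p i : ℤ) ∣ ((∏ j ∈ Finset.univ.erase i, p j : ℕ) : ℤ)) := by
      rw [Int.natCast_dvd_natCast]
      intro hdvd
      exact (hp i).ne_one (Nat.eq_one_of_dvd_one (hcop ▸ Nat.dvd_gcd dvd_rfl hdvd))
    rw [hfac, Nat.cast_mul, norm_mul, Padic.norm_p]
    have h1 : ‖(((∏ j ∈ Finset.univ.erase i, p j : ℕ) : ℤ) : ℚ_[p i])‖ = 1 :=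
      aux_norm_int_eq_one hndvd
    rw [Int.cast_natCast] at h1
    rw [h1, mul_one]
  have hnormq : ∀ i, ‖(q : ℚ_[p i])‖ = 1 := by
    intro i
    have : ¬ ((p i : ℤ) ∣ (q : ℤ)) := by
      rw [Int.natCast_dvd_natCast]
      intro hdvd
      exact hqp i ((Nat.prime_dvd_prime_iff_eq (hp i) hq).mp hdvd).symm
    simpa using aux_norm_int_eq_one (p := p i) (k := (q : ℤ)) this
  -- choose m making P^m * x i integral
  have hexm : ∀ i, ∃ m : ℕ, ‖x i‖ < 2 ^ m := fun i =>
    pow_unbounded_of_one_lt _ one_lt_two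
  choose mi hmi using hexm
  set m : ℕ := Finset.univ.sup mi with hm
  have hym : ∀ i, ‖(P : ℚ_[p i]) ^ m * x i‖ ≤ 1 := by
    intro i
    rw [norm_mul, norm_pow, hnormP i]
    calc ((p i : ℝ))⁻¹ ^ m * ‖x i‖ ≤ ((2 : ℝ))⁻¹ ^ m * 2 ^ m := by
          apply mul_le_mul
          · exact pow_le_pow_left₀ (by positivity) (inv_anti₀ (by norm_num) (hp2 i)) m
          · exact le_trans (hmi i).le
              (pow_le_pow_right₀ one_le_two (Finset.le_sup (Finset.mem_univ i)))
          · exact norm_nonneg _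
          · positivity
      _ = 1 := by rw [← mul_pow]; norm_num
  obtain ⟨t, ht⟩ := exists_pow_lt_of_lt_one hε (by norm_num : (1 / 2 : ℝ) < 1)
  set K : ℕ := m + t with hK
  -- integer approximations a_i to P^m * x i
  have hexa : ∀ i, ∃ ai : ℤ, ‖(ai : ℚ_[p i]) - (P : ℚ_[p i]) ^ m * x i‖ ≤ ((p i : ℝ))⁻¹ ^ K := by
    intro i
    set y : ℤ_[p i] := ⟨(P : ℚ_[p i]) ^ m * x i, hym i⟩ with hy
    obtain ⟨ai, hai⟩ := (PadicInt.denseRange_intCast (p := p i)).exists_dist_lt y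
      (by have := hppos i; positivity : (0 : ℝ) < ((p i : ℝ))⁻¹ ^ K)
    refine ⟨ai, ?_⟩
    have : dist y ((ai : ℤ_[p i])) = ‖(ai : ℚ_[p i]) - (P : ℚ_[p i]) ^ m * x i‖ := by
      rw [dist_eq_norm, ← norm_neg, ← PadicInt.padic_norm_e_of_padicInt]
      push_cast
      ring_nf
      rw [neg_add_eq_sub]
    rw [this] at hai
    exact hai.le
  choose ai hai using hexa
  -- CRT
  have hcop : Pairwise fun i j : Fin n =>
      IsCoprime (Ideal.span {((p i : ℤ)) ^ K}) (Ideal.span {((p j : ℤ)) ^ K}) := by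
    intro i j hij
    rw [Ideal.isCoprime_span_singleton_iff]
    exact IsCoprime.pow (Nat.isCoprime_iff_coprime.mpr
      ((Nat.coprime_primes (hp i) (hp j)).mpr fun h => hij (hdist h)))
  obtain ⟨a, ha⟩ := Ideal.exists_forall_sub_mem_ideal hcop ai
  have hadvd : ∀ i, ((p i : ℤ)) ^ K ∣ a - ai i := fun i =>
    Ideal.mem_span_singleton.mp (ha i)
  have hanorm : ∀ i, ‖((a : ℚ_[p i]) - (ai i : ℚ_[p i]))‖ ≤ ((p i : ℝ))⁻¹ ^ K := by
    intro i
    have := (Padic.norm_int_le_pow_iff_dvd (p := p i) (a - ai i) K).mpr (hadvd i)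
    rw [zpow_neg, zpow_natCast, ← inv_pow] at this
    push_cast at this
    exact this
  have hbound : ∀ i, ‖(a : ℚ_[p i]) - (P : ℚ_[p i]) ^ m * x i‖ ≤ ((p i : ℝ))⁻¹ ^ K := by
    intro i
    have heq : (a : ℚ_[p i]) - (P : ℚ_[p i]) ^ m * x i =
        ((a : ℚ_[p i]) - (ai i : ℚ_[p i])) + ((ai i : ℚ_[p i]) - (P : ℚ_[p i]) ^ m * x i) := by
      ring
    rw [heq]
    exact le_trans (Padic.nonarchimedean _ _) (max_le (hanorm i) (hai i))
  -- archimedean part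
  set θ0 : ℚ := (a : ℚ) / (P : ℚ) ^ m with hθ0
  have hq1 : (1 : ℝ) < (q : ℝ) := by exact_mod_cast hq.one_lt
  obtain ⟨s, hs⟩ := pow_unbounded_of_one_lt ((P : ℝ) ^ K / ε) hq1
  have hqs : (0 : ℝ) < (q : ℝ) ^ s := by positivity
  have hPK : (0 : ℝ) < (P : ℝ) ^ K := by positivity
  have hsε : (P : ℝ) ^ K / (q : ℝ) ^ s < ε := by
    rw [div_lt_iff₀ hqs]
    calc (P : ℝ) ^ K = ((P : ℝ) ^ K / ε) * ε := by field_simp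
      _ < (q : ℝ) ^ s * ε := by exact mul_lt_mul_of_pos_right hs hε
      _ = ε * (q : ℝ) ^ s := mul_comm _ _

  set z : ℝ := (x_inf - (θ0 : ℝ)) * (q : ℝ) ^ s / (P : ℝ) ^ K with hz
  set b : ℤ := ⌊z⌋ with hb
  set θ : ℚ := θ0 + (b : ℚ) * (P : ℚ) ^ K / (q : ℚ) ^ s with hθ
  have hPQ : (P : ℚ) ≠ 0 := by exact_mod_cast hPpos.ne'
  have hqQ : (q : ℚ) ≠ 0 := by exact_mod_cast hq.pos.ne'
  refine ⟨θ, ⟨a * P ^ s * q ^ (m + s) + b * P ^ (K + m + s) * q ^ m, m + s, ?_⟩, ?_, ?_⟩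
  · rw [hθ, hθ0]
    push_cast
    field_simp
    ring
  · intro i
    show ‖(θ : ℚ_[p i]) - x i‖ < ε
    have hPp : ((P : ℚ_[p i])) ≠ 0 := by
      exact_mod_cast (Nat.cast_ne_zero (R := ℚ_[p i])).mpr hPpos.ne'
    have hqp' : ((q : ℚ_[p i])) ≠ 0 := by
      exact_mod_cast (Nat.cast_ne_zero (R := ℚ_[p i])).mpr hq.pos.ne'
    have hsplit : (θ : ℚ_[p i]) - x i =
        ((a : ℚ_[p i]) - (P : ℚ_[p i]) ^ m * x i) / (P : ℚ_[p i]) ^ m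
          + (b : ℚ_[p i]) * (P : ℚ_[p i]) ^ K / (q : ℚ_[p i]) ^ s := by
      rw [hθ, hθ0]
      push_cast
      field_simp
      ring
    rw [hsplit]
    have hple : ((p i : ℝ))⁻¹ ≤ (1 / 2 : ℝ) := by
      rw [one_div]
      exact inv_anti₀ (by norm_num) (hp2 i)
    have hpinv_nonneg : (0:ℝ) ≤ ((p i : ℝ))⁻¹ := by positivity
    have h1 : ‖((a : ℚ_[p i]) - (P : ℚ_[p i]) ^ m * x i) / (P : ℚ_[p i]) ^ m‖ < ε := by
      rw [norm_div, norm_pow, hnormP i]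
      have hden : (0:ℝ) < ((p i : ℝ))⁻¹ ^ m := by have := hppos i; positivity
      rw [div_lt_iff₀ hden]
      calc ‖(a : ℚ_[p i]) - (P : ℚ_[p i]) ^ m * x i‖ ≤ ((p i : ℝ))⁻¹ ^ K := hbound i
        _ = ((p i : ℝ))⁻¹ ^ t * ((p i : ℝ))⁻¹ ^ m := by rw [← pow_add, hK]; ring_nf
        _ ≤ (1/2 : ℝ) ^ t * ((p i : ℝ))⁻¹ ^ m := by
            apply mul_le_mul_of_nonneg_right (pow_le_pow_left₀ hpinv_nonneg hple t) hden.le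
        _ < ε * ((p i : ℝ))⁻¹ ^ m := mul_lt_mul_of_pos_right ht hden
    have h2 : ‖(b : ℚ_[p i]) * (P : ℚ_[p i]) ^ K / (q : ℚ_[p i]) ^ s‖ < ε := by
      rw [norm_div, norm_mul, norm_pow, norm_pow, hnormP i, hnormq i, one_pow, div_one]
      calc ‖(b : ℚ_[p i])‖ * ((p i : ℝ))⁻¹ ^ K
          ≤ 1 * ((p i : ℝ))⁻¹ ^ K := by
            apply mul_le_mul_of_nonneg_right (Padic.norm_int_le_one b) (by positivity)
        _ = ((p i : ℝ))⁻¹ ^ t * ((p i : ℝ))⁻¹ ^ m := by rw [one_mul, ← pow_add, hK]; ring_nf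
        _ ≤ (1/2 : ℝ) ^ t * 1 := by
            apply mul_le_mul (pow_le_pow_left₀ hpinv_nonneg hple t)
              (pow_le_one₀ hpinv_nonneg (inv_le_one_of_one_le₀ (by linarith [hp2 i])))
              (by positivity) (by positivity)
        _ < ε := by rw [mul_one]; exact ht
    calc ‖_ + _‖ ≤ max _ _ := Padic.nonarchimedean _ _
      _ < ε := max_lt h1 h2
  · show |(θ : ℝ) - x_inf| < ε
    have hzb : z * (P : ℝ) ^ K / (q : ℝ) ^ s = x_inf - (θ0 : ℝ) := by
      rw [hz]; field_simp
    have hθR : (θ : ℝ) = (θ0 : ℝ) + (b : ℝ) * (P : ℝ) ^ K / (q : ℝ) ^ s := by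
      rw [hθ]; push_cast; ring
    have key : (θ : ℝ) - x_inf = ((b : ℝ) - z) * ((P : ℝ) ^ K / (q : ℝ) ^ s) := by
      rw [hθR]
      have : (x_inf - (θ0:ℝ)) = z * (P : ℝ) ^ K / (q : ℝ) ^ s := hzb.symm
      rw [show (θ0:ℝ) + (b : ℝ) * (P : ℝ) ^ K / (q : ℝ) ^ s - x_inf
          = (b : ℝ) * (P : ℝ) ^ K / (q : ℝ) ^ s - (x_inf - (θ0:ℝ)) by ring, this]
      ring
    rw [key, abs_mul]
    have hbz : |(b : ℝ) - z| ≤ 1 := by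
      rw [abs_le]
      constructor
      · linarith [Int.sub_one_lt_floor z]
      · linarith [Int.floor_le z]
    have habs : |(P : ℝ) ^ K / (q : ℝ) ^ s| = (P : ℝ) ^ K / (q : ℝ) ^ s :=
      abs_of_pos (by positivity)
    calc |(b : ℝ) - z| * |(P : ℝ) ^ K / (q : ℝ) ^ s|
        ≤ 1 * ((P : ℝ) ^ K / (q : ℝ) ^ s) := by
          rw [habs]; exact mul_le_mul_of_nonneg_right hbz (by positivity)
      _ < ε := by rw [one_mul]; exact hsε
end
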